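/- arXiv:2210.05007 — 2 statements merged into one kernel-verified Lean document; each statement's English description precedes it below -/
import Mathlib

section
/- Let ξ > 0, let M ≥ 1 be an integer, let E satisfy 0 ≤ E ≤ (1+ξ)/(1+3ξ), and let E_0 ∈ [0, E]. Then the minimum of f_{M,ξ}(p) over all vectors p = (p_0, …, p_M) ∈ ℝ^{M+1} satisfying p_n ≥ 0 for all n, ∑_{n=0}^{M} p_n = 1, and ∑_{n=0}^{M} n·p_n = E_0 (equality constraint), is attained at the unique point given by p_0 = 1−E_0, p_1 = E_0, and p_n = 0 for all n ∈ {2, …, M}. -/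
open Finset

/-- The objective function `f_{M,ξ}` of the unidirectional teleportation optimization:
`f_{M,ξ}(p) = (1/(1+ξ)) [ (∑_{n=0}^{M} p_n/(1+ξ)^n)^2 + (∑_{n=1}^{M} p_n ξ/(1+ξ)^n)^2 ]`. -/
noncomputable def fUni (M : ℕ) (ξ : ℝ) (p : Fin (M + 1) → ℝ) : ℝ :=
  (1 / (1 + ξ)) *
    ((∑ n : Fin (M + 1), p n / (1 + ξ) ^ (n : ℕ)) ^ 2 +
      (∑ n : Fin (M + 1), if 1 ≤ (n : ℕ) then p n * ξ / (1 + ξ) ^ (n : ℕ) else 0) ^ 2)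

/-- Feasibility with energy-equality constraint: `p_n ≥ 0`, `∑ p_n = 1`, `∑ n p_n = E₀`. -/
def FeasibleUniEq (M : ℕ) (E₀ : ℝ) (p : Fin (M + 1) → ℝ) : Prop :=
  (∀ n, 0 ≤ p n) ∧ (∑ n, p n = 1) ∧ (∑ n : Fin (M + 1), ((n : ℕ) : ℝ) * p n = E₀)

/-- The candidate optimal point: `p_0 = 1 - E₀`, `p_1 = E₀`, `p_n = 0` for `n ≥ 2`. -/
noncomputable def optUni (M : ℕ) (E₀ : ℝ) : Fin (M + 1) → ℝ :=
  fun n => if (n : ℕ) = 0 then 1 - E₀ else if (n : ℕ) = 1 then E₀ else 0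

/-! With `x = 1/(1+ξ)` and the discounted tail `T(p) = ∑_{n ≥ 1} pₙ xⁿ` one has
`f(p) = x (s² + t²)` for the vector `v(p) = (s, t) = (p₀ + T, ξ T)`, which is linear in `p`.
Hence `f(p) ≥ f(q)` as soon as `⟨v(q), v(p)⟩ ≥ |v(q)|²`, with equality only if `v(p) = v(q)`.
For the candidate `q` this inner product is `∑ pₙ gₙ` with `g₀ = A = 1 - E₀ + E₀ x` and
`gₙ = C xⁿ` for `n ≥ 1`, where `C = A + ξ² E₀ x`.
As mass and mean are fixed and `q` lives on `{0, 1}`, it suffices that `g` lies above the line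
through its values at `0` and `1`; since `n ↦ C xⁿ` is convex, only `n = 2` has to be checked,
and that is the condition `E₀ (1 + 3ξ) ≤ 1 + ξ`. In the equality case `v(p) = v(q)` gives
`p₀ = 1 - E₀`, after which the two moment constraints leave only `p = q`. -/
lemma add_nat_mul_le_mul_pow {C x a b : ℝ} (hC : 0 ≤ C) (hx₀ : 0 ≤ x) (hx₁ : x ≤ 1)
    (h₁ : C * x = a + b) (h₂ : a + 2 * b ≤ C * x ^ 2) :
    ∀ n : ℕ, 1 ≤ n → a + n * b ≤ C * x ^ n := by
  intro n hn
  induction n, hn using Nat.le_induction with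
  | base => simp [h₁]
  | succ n hn ih =>
    have hxn : C * (x - 1) * x ≤ C * (x - 1) * x ^ n :=
      mul_le_mul_of_nonpos_left (pow_le_of_le_one hx₀ hx₁ (by omega))
        (mul_nonpos_of_nonneg_of_nonpos hC (by linarith))
    push_cast
    linear_combination ih + hxn + h₂ + h₁

lemma sq_add_sq_le_of_le_inner {s t s₀ t₀ : ℝ} (h : s₀ ^ 2 + t₀ ^ 2 ≤ s₀ * s + t₀ * t) :
    s₀ ^ 2 + t₀ ^ 2 ≤ s ^ 2 + t ^ 2 ∧ (s ^ 2 + t ^ 2 = s₀ ^ 2 + t₀ ^ 2 → s = s₀ ∧ t = t₀) := by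
  refine ⟨by nlinarith [sq_nonneg (s - s₀), sq_nonneg (t - t₀)], fun heq => ?_⟩
  have hs : (s - s₀) ^ 2 = 0 := by nlinarith [sq_nonneg (s - s₀), sq_nonneg (t - t₀)]
  have ht : (t - t₀) ^ 2 = 0 := by nlinarith [sq_nonneg (s - s₀), sq_nonneg (t - t₀)]
  exact ⟨by simpa [sub_eq_zero] using hs, by simpa [sub_eq_zero] using ht⟩

def discTail (M : ℕ) (x : ℝ) (p : Fin (M + 1) → ℝ) : ℝ :=
  ∑ i : Fin M, p i.succ * x ^ ((i : ℕ) + 1)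

lemma fUni_eq_discTail (M : ℕ) (ξ : ℝ) (p : Fin (M + 1) → ℝ) :
    fUni M ξ p = (1 + ξ)⁻¹ * ((p 0 + discTail M (1 + ξ)⁻¹ p) ^ 2
      + (ξ * discTail M (1 + ξ)⁻¹ p) ^ 2) := by
  have hfirst : ∑ n : Fin (M + 1), p n / (1 + ξ) ^ (n : ℕ) = p 0 + discTail M (1 + ξ)⁻¹ p := by
    simp [Fin.sum_univ_succ, discTail, div_eq_mul_inv, inv_pow]
  have hsecond : (∑ n : Fin (M + 1), if 1 ≤ (n : ℕ) then p n * ξ / (1 + ξ) ^ (n : ℕ) else 0)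
      = ξ * discTail M (1 + ξ)⁻¹ p := by
    simp only [Fin.sum_univ_succ, discTail, mul_sum]
    simp [div_eq_mul_inv, inv_pow, mul_assoc, mul_left_comm]
  rw [fUni, hfirst, hsecond, one_div]

lemma FeasibleUniEq.affine_le_sum_mul {M : ℕ} {E₀ a b : ℝ} {p g : Fin (M + 1) → ℝ}
    (hp : FeasibleUniEq M E₀ p) (hg : ∀ n : Fin (M + 1), a + n * b ≤ g n) :
    a + E₀ * b ≤ ∑ n, p n * g n := by
  obtain ⟨hnn, hsum, hmean⟩ := hp
  calc a + E₀ * b = ∑ n, (a * p n + (n * p n) * b) := by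
        rw [sum_add_distrib, ← mul_sum, ← sum_mul, hsum, hmean, mul_one]
    _ = ∑ n, p n * (a + n * b) := sum_congr rfl fun n _ => by ring
    _ ≤ ∑ n, p n * g n := sum_le_sum fun n _ => mul_le_mul_of_nonneg_left (hg n) (hnn n)

lemma feasibleUniEq_optUni {m : ℕ} {E₀ : ℝ} (h₀ : 0 ≤ E₀) (h₁ : E₀ ≤ 1) :
    FeasibleUniEq (m + 1) E₀ (optUni (m + 1) E₀) := by
  refine ⟨fun n => ?_, ?_, ?_⟩
  · unfold optUni; split_ifs <;> linarith
  · simp [Fin.sum_univ_succ, optUni]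
  · simp [Fin.sum_univ_succ, optUni]

lemma discTail_optUni (m : ℕ) (x E₀ : ℝ) : discTail (m + 1) x (optUni (m + 1) E₀) = E₀ * x := by
  simp [discTail, optUni]

lemma FeasibleUniEq.eq_optUni {m : ℕ} {E₀ : ℝ} {p : Fin (m + 2) → ℝ}
    (hp : FeasibleUniEq (m + 1) E₀ p) (h₀ : p 0 = 1 - E₀) : p = optUni (m + 1) E₀ := by
  obtain ⟨hnn, hsum, hmean⟩ := hp
  rw [Fin.sum_univ_succ, Fin.sum_univ_succ] at hsum hmean
  simp only [Fin.succ_zero_eq_one, Fin.val_zero, Fin.val_one, Fin.val_succ] at hsum hmean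
  push_cast at hmean
  have htail : ∑ i : Fin m, ((i : ℝ) + 1) * p i.succ.succ = 0 := by
    have hshift : ∑ i : Fin m, ((i : ℝ) + 1) * p i.succ.succ
        = ∑ i : Fin m, ((i : ℝ) + 1 + 1) * p i.succ.succ - ∑ i : Fin m, p i.succ.succ := by
      rw [← sum_sub_distrib]; exact sum_congr rfl fun i _ => by ring
    linarith
  have hzero : ∀ i : Fin m, p i.succ.succ = 0 := fun i => by
    have hterm := (sum_eq_zero_iff_of_nonneg fun (i : Fin m) _ =>
      mul_nonneg (by positivity) (hnn _)).1 htail i (mem_univ i)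
    exact (mul_eq_zero.1 hterm).resolve_left (by positivity)
  have h₁ : p 1 = E₀ := by simp only [hzero, sum_const_zero] at hsum; linarith
  funext n
  cases n using Fin.cases with
  | zero => simp [optUni, h₀]
  | succ n =>
    cases n using Fin.cases with
    | zero => simp [optUni, h₁]
    | succ i => simp [optUni, hzero]

lemma FeasibleUniEq.sq_add_sq_le_inner {M : ℕ} {ξ x E₀ : ℝ} {p : Fin (M + 1) → ℝ}
    (hp : FeasibleUniEq M E₀ p) (hξ : 0 < ξ) (hx : x = (1 + ξ)⁻¹) (hE₀ : 0 ≤ E₀)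
    (hE : E₀ * (1 + 3 * ξ) ≤ 1 + ξ) :
    (1 - E₀ + E₀ * x) ^ 2 + (ξ * (E₀ * x)) ^ 2
      ≤ (1 - E₀ + E₀ * x) * (p 0 + discTail M x p) + ξ * (E₀ * x) * (ξ * discTail M x p) := by
  have hx₀ : 0 < x := hx ▸ by positivity
  have hx₁ : x ≤ 1 := hx ▸ inv_le_one_of_one_le₀ (by linarith)
  have hE₁ : E₀ ≤ 1 := by nlinarith
  set A := 1 - E₀ + E₀ * x with hA
  set C := A + ξ ^ 2 * (E₀ * x) with hC
  have hC₀ : 0 ≤ C :=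
    add_nonneg (add_nonneg (sub_nonneg.2 hE₁) (mul_nonneg hE₀ hx₀.le)) (by positivity)
  have hconvex : A + 2 * (C * x - A) ≤ C * x ^ 2 := by
    have : C * x ^ 2 - (A + 2 * (C * x - A)) = ξ ^ 2 * x ^ 3 * (1 + ξ - E₀ * (1 + 3 * ξ)) := by
      rw [hC, hA, hx]; field_simp; ring
    nlinarith [mul_nonneg (by positivity : 0 ≤ ξ ^ 2 * x ^ 3) (sub_nonneg.2 hE)]
  have hline := add_nat_mul_le_mul_pow hC₀ hx₀.le hx₁ (by ring : C * x = A + (C * x - A)) hconvex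
  have hbound := hp.affine_le_sum_mul (a := A) (b := C * x - A)
    (g := Fin.cons A fun i : Fin M => C * x ^ ((i : ℕ) + 1)) fun n => by
      cases n using Fin.cases with
      | zero => simp
      | succ i => simpa using hline (i + 1) (by omega)
  have hsum : ∑ i : Fin M, p i.succ * (C * x ^ ((i : ℕ) + 1)) = C * discTail M x p := by
    rw [discTail, mul_sum]; exact sum_congr rfl fun i _ => by ring
  rw [Fin.sum_univ_succ, Fin.cons_zero] at hbound
  simp only [Fin.cons_succ, hsum] at hbound
  linear_combination hbound - discTail M x p * hC - A * hA

theorem unidirectional_optimal_eq_constraint_general (ξ E E₀ : ℝ) (M : ℕ) (hξ : 0 < ξ)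
    (hM : 1 ≤ M) (hE : E ≤ (1 + ξ) / (1 + 3 * ξ))
    (hE₀ : E₀ ∈ Set.Icc 0 E) :
    FeasibleUniEq M E₀ (optUni M E₀) ∧
      ∀ p : Fin (M + 1) → ℝ, FeasibleUniEq M E₀ p →
        fUni M ξ (optUni M E₀) ≤ fUni M ξ p ∧
          (fUni M ξ p = fUni M ξ (optUni M E₀) → p = optUni M E₀) := by
  obtain ⟨m, rfl⟩ : ∃ m, M = m + 1 := ⟨M - 1, by omega⟩
  have hE₀b : E₀ * (1 + 3 * ξ) ≤ 1 + ξ := (le_div_iff₀ (by linarith)).1 (hE₀.2.trans hE)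
  refine ⟨feasibleUniEq_optUni hE₀.1 (by nlinarith [hE₀.1]), fun p hp => ?_⟩
  obtain ⟨hle, heq⟩ := sq_add_sq_le_of_le_inner (hp.sq_add_sq_le_inner hξ rfl hE₀.1 hE₀b)
  have hq₀ : optUni (m + 1) E₀ 0 = 1 - E₀ := by simp [optUni]
  rw [fUni_eq_discTail, fUni_eq_discTail, hq₀, discTail_optUni]
  refine ⟨mul_le_mul_of_nonneg_left hle (by positivity), fun h => ?_⟩
  obtain ⟨hs, ht⟩ := heq (mul_left_cancel₀ (by positivity) h)
  exact hp.eq_optUni (by linarith [mul_left_cancel₀ hξ.ne' ht])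

theorem unidirectional_optimal_eq_constraint (ξ E E₀ : ℝ) (M : ℕ) (hξ : 0 < ξ)
    (hM : 1 ≤ M) (hE0 : 0 ≤ E) (hE : E ≤ (1 + ξ) / (1 + 3 * ξ))
    (hE₀ : E₀ ∈ Set.Icc 0 E) :
    FeasibleUniEq M E₀ (optUni M E₀) ∧
      ∀ p : Fin (M + 1) → ℝ, FeasibleUniEq M E₀ p →
        fUni M ξ (optUni M E₀) ≤ fUni M ξ p ∧
          (fUni M ξ p = fUni M ξ (optUni M E₀) → p = optUni M E₀) :=
  unidirectional_optimal_eq_constraint_general ξ E E₀ M hξ hM hE hE₀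
end

section
/- Let ξ > 0, let M ≥ 1 be an integer, let E satisfy 0 ≤ 2E ≤ (1+ξ)/(2+3ξ), and let E_0 ∈ [0, E]. Then the minimum of f_{M,ξ,ξ}(p) over all vectors p = (p_{m,n})_{m,n=0}^{M} satisfying p_{m,n} ≥ 0 for all m, n, ∑_{m,n=0}^{M} p_{m,n} = 1, and ∑_{m,n=0}^{M} (m+n) p_{m,n} = 2E_0 (equality constraint), is attained at the unique point given by p_{0,0} = 1−2E_0, p_{0,1} = p_{1,0} = E_0, and p_{m,n} = 0 whenever m+n ≥ 2. -/
open Finset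

/-- `T_ξ^{mm'} = ∑_{k=0}^{min(m,m')} C(m,k) C(m',k) ξ^{2k}/(1+ξ)^{m+m'}`. -/
noncomputable def Tbi (ξ : ℝ) (m m' : ℕ) : ℝ :=
  ∑ k ∈ Finset.range (min m m' + 1),
    (m.choose k : ℝ) * (m'.choose k : ℝ) * ξ ^ (2 * k) / (1 + ξ) ^ (m + m')

/-- The objective function `f_{M,ξ,ξ'}` of the bidirectional teleportation optimization. -/
noncomputable def fBi (M : ℕ) (ξ ξ' : ℝ) (p : Fin (M + 1) → Fin (M + 1) → ℝ) : ℝ :=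
  (1 / ((1 + ξ) * (1 + ξ'))) *
    ∑ m : Fin (M + 1), ∑ n : Fin (M + 1), ∑ m' : Fin (M + 1), ∑ n' : Fin (M + 1),
      p m n * p m' n' * Tbi ξ (m : ℕ) (m' : ℕ) * Tbi ξ' (n : ℕ) (n' : ℕ)

/-- Feasibility with energy-equality constraint:
`p_{m,n} ≥ 0`, `∑ p_{m,n} = 1`, `∑ (m+n) p_{m,n} = 2E₀`. -/
def FeasibleBiEq (M : ℕ) (E₀ : ℝ) (p : Fin (M + 1) → Fin (M + 1) → ℝ) : Prop :=
  (∀ m n, 0 ≤ p m n) ∧ (∑ m : Fin (M + 1), ∑ n : Fin (M + 1), p m n = 1) ∧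
    (∑ m : Fin (M + 1), ∑ n : Fin (M + 1), (((m : ℕ) : ℝ) + ((n : ℕ) : ℝ)) * p m n = 2 * E₀)

/-- The candidate optimal point: `p_{0,0} = 1 - 2E₀`, `p_{0,1} = p_{1,0} = E₀`,
and `p_{m,n} = 0` whenever `m + n ≥ 2`. -/
noncomputable def optBi (M : ℕ) (E₀ : ℝ) : Fin (M + 1) → Fin (M + 1) → ℝ :=
  fun m n =>
    if (m : ℕ) = 0 ∧ (n : ℕ) = 0 then 1 - 2 * E₀
    else if (m : ℕ) + (n : ℕ) = 1 then E₀ else 0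

/-! Since `T_ξ^{mm'} = ∑ₖ w(m,k) w(m',k)` with `w = binomWeight ξ`, `(1+ξ)² f(p)` is the squared
`ℓ²` norm of the binomially thinned distribution `q = (w ⊗ w) p`. Keep only `q₀₀, q₀₁, q₁₀`. With `t = 1/(1+ξ)` and `s = m + n`, the
two constraints give `q₀₀ = a + D` and `q₀₁ + q₁₀ = 2b - X`, where `a = 1 - 2E₀(1-t)`,
`b = (1-t)E₀`, `D = ∑ p_{mn} (t^s - 1 + (1-t)s) ≥ 0` (the gap in Bernoulli's inequality) and
`X = ξ ∑ p_{mn} s (t - t^s)`. For `E₀ ≤ 1/4` one has `b X ≤ a D` termwise, hence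
`q₀₀² + q₀₁² + q₁₀² ≥ a² + 2b²`, the value at the candidate point. Equality forces `D = 0`, so `p`
lives on `m + n ≤ 1`, and `q₀₁ = q₁₀`, so `p₀₁ = p₁₀`.
-/

-- the binomial probability of `k` successes in `m` trials with success probability `ξ/(1+ξ)`
noncomputable def binomWeight (ξ : ℝ) (m k : ℕ) : ℝ := m.choose k * ξ ^ k / (1 + ξ) ^ m

lemma binomWeight_eq_zero_of_lt (ξ : ℝ) {m k : ℕ} (h : m < k) : binomWeight ξ m k = 0 := by
  simp [binomWeight, Nat.choose_eq_zero_of_lt h]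

lemma binomWeight_zero_right (ξ : ℝ) (m : ℕ) : binomWeight ξ m 0 = (1 + ξ)⁻¹ ^ m := by
  simp [binomWeight]

lemma binomWeight_one_right (ξ : ℝ) (m : ℕ) : binomWeight ξ m 1 = m * ξ * (1 + ξ)⁻¹ ^ m := by
  simp [binomWeight, div_eq_mul_inv]

lemma Tbi_eq_sum_binomWeight (ξ : ℝ) {N m m' : ℕ} (hm : m ≤ N) :
    Tbi ξ m m' = ∑ k ∈ range (N + 1), binomWeight ξ m k * binomWeight ξ m' k := by
  calc Tbi ξ m m' = ∑ k ∈ range (min m m' + 1), binomWeight ξ m k * binomWeight ξ m' k :=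
        sum_congr rfl fun k _ => by simp only [binomWeight]; ring
    _ = _ := by
        refine sum_subset (range_subset_range.2 (by omega)) fun k _ hk => ?_
        have hk : min m m' < k := by rw [mem_range] at hk; omega
        rcases min_lt_iff.1 hk with h | h <;> simp [binomWeight_eq_zero_of_lt ξ h]

lemma sum_sum_mul_mul_sum_eq_sum_sq {ι κ : Type*} [Fintype ι] [Fintype κ] (P : ι → ℝ)
    (c : ι → κ → ℝ) :
    ∑ q, ∑ q', P q * P q' * ∑ r, c q r * c q' r = ∑ r, (∑ q, P q * c q r) ^ 2 := by
  simp_rw [sq, sum_mul_sum, mul_sum, sum_comm (γ := κ)]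
  exact sum_congr rfl fun q _ => sum_congr rfl fun q' _ => sum_congr rfl fun r _ => by ring

noncomputable def binomThin {M : ℕ} (ξ : ℝ) (p : Fin (M + 1) → Fin (M + 1) → ℝ) (k l : ℕ) : ℝ :=
  ∑ m, ∑ n, p m n * binomWeight ξ m k * binomWeight ξ n l

lemma fBi_eq_sum_sq_binomThin (M : ℕ) (ξ : ℝ) (p : Fin (M + 1) → Fin (M + 1) → ℝ) :
    fBi M ξ ξ p =
      1 / ((1 + ξ) * (1 + ξ)) * ∑ k : Fin (M + 1), ∑ l : Fin (M + 1), binomThin ξ p k l ^ 2 := by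
  have hT : ∀ m m' : Fin (M + 1),
      Tbi ξ m m' = ∑ k : Fin (M + 1), binomWeight ξ m k * binomWeight ξ m' k := fun m m' => by
    rw [Fin.sum_univ_eq_sum_range (fun k => binomWeight ξ m k * binomWeight ξ m' k)]
    exact Tbi_eq_sum_binomWeight ξ (Nat.lt_succ_iff.1 m.isLt)
  have := sum_sum_mul_mul_sum_eq_sum_sq (fun q : Fin (M + 1) × Fin (M + 1) => p q.1 q.2)
    (fun q (r : Fin (M + 1) × Fin (M + 1)) => binomWeight ξ q.1 r.1 * binomWeight ξ q.2 r.2)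
  simp only [Fintype.sum_prod_type, mul_assoc] at this
  simp only [fBi, binomThin, mul_assoc, ← this, hT, sum_mul_sum, mul_comm, mul_left_comm]

lemma Fin.val_one_of_one_le {M : ℕ} (hM : 1 ≤ M) : ((1 : Fin (M + 1)) : ℕ) = 1 := by
  rw [Fin.val_one', Nat.mod_eq_of_lt (by omega)]

lemma Fin.add_lt_two_iff {M : ℕ} (hM : 1 ≤ M) {m n : Fin (M + 1)} :
    (m : ℕ) + n < 2 ↔ m = 0 ∧ n = 0 ∨ m = 0 ∧ n = 1 ∨ m = 1 ∧ n = 0 := by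
  obtain ⟨K, rfl⟩ : ∃ K, M = K + 1 := ⟨M - 1, by omega⟩
  simp only [Fin.ext_iff, Fin.val_zero, Fin.val_one]
  omega

lemma sum_sum_eq_of_eq_zero_of_two_le {M : ℕ} (hM : 1 ≤ M) {h : Fin (M + 1) → Fin (M + 1) → ℝ}
    (H : ∀ m n : Fin (M + 1), 2 ≤ (m : ℕ) + n → h m n = 0) :
    ∑ m, ∑ n, h m n = h 0 0 + h 0 1 + h 1 0 := by
  obtain ⟨K, rfl⟩ : ∃ K, M = K + 1 := ⟨M - 1, by omega⟩
  rw [← Fintype.sum_prod_type', ← sum_subset (subset_univ {(0, 0), (0, 1), (1, 0)})]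
  · simp [sum_insert, Prod.ext_iff, add_assoc]
  · rintro ⟨m, n⟩ _ hmn
    refine H m n (not_lt.1 fun hlt => hmn ?_)
    rcases (Fin.add_lt_two_iff (by omega)).1 hlt with ⟨rfl, rfl⟩ | ⟨rfl, rfl⟩ | ⟨rfl, rfl⟩ <;> simp

lemma add_add_le_sum_sum {M : ℕ} (hM : 1 ≤ M) {h : Fin (M + 1) → Fin (M + 1) → ℝ}
    (H : ∀ m n, 0 ≤ h m n) : h 0 0 + h 0 1 + h 1 0 ≤ ∑ m, ∑ n, h m n := by
  calc h 0 0 + h 0 1 + h 1 0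
      = ∑ m : Fin (M + 1), ∑ n : Fin (M + 1), if (m : ℕ) + n < 2 then h m n else 0 := by
        rw [sum_sum_eq_of_eq_zero_of_two_le hM fun m n hmn => if_neg (by omega)]
        simp only [Fin.val_zero, Fin.val_one_of_one_le hM]
        norm_num
    _ ≤ ∑ m, ∑ n, h m n := sum_le_sum fun m _ => sum_le_sum fun n _ => by
        split_ifs
        exacts [le_rfl, H m n]

lemma eq_of_eq_zero_of_two_le {M : ℕ} (hM : 1 ≤ M) {p q : Fin (M + 1) → Fin (M + 1) → ℝ}
    (hp : ∀ m n : Fin (M + 1), 2 ≤ (m : ℕ) + n → p m n = 0)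
    (hq : ∀ m n : Fin (M + 1), 2 ≤ (m : ℕ) + n → q m n = 0)
    (h00 : p 0 0 = q 0 0) (h01 : p 0 1 = q 0 1) (h10 : p 1 0 = q 1 0) : p = q := by
  funext m n
  by_cases hmn : 2 ≤ (m : ℕ) + n
  · rw [hp m n hmn, hq m n hmn]
  · rcases (Fin.add_lt_two_iff hM).1 (not_le.1 hmn) with ⟨rfl, rfl⟩ | ⟨rfl, rfl⟩ | ⟨rfl, rfl⟩
    exacts [h00, h01, h10]

section binomThin

variable {M : ℕ} (ξ : ℝ) (p : Fin (M + 1) → Fin (M + 1) → ℝ)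

lemma binomThin_zero_zero :
    binomThin ξ p 0 0 = ∑ m, ∑ n, p m n * (1 + ξ)⁻¹ ^ ((m : ℕ) + (n : ℕ)) := by
  simp only [binomThin, binomWeight_zero_right, pow_add, mul_assoc]

lemma binomThin_zero_one_add_one_zero :
    binomThin ξ p 0 1 + binomThin ξ p 1 0 =
      ξ * ∑ m, ∑ n,
        p m n * ((((m : ℕ) : ℝ) + ((n : ℕ) : ℝ)) * (1 + ξ)⁻¹ ^ ((m : ℕ) + (n : ℕ))) := by
  simp only [binomThin, binomWeight_zero_right, binomWeight_one_right, ← sum_add_distrib, mul_sum]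
  exact sum_congr rfl fun m _ => sum_congr rfl fun n _ => by ring

lemma binomThin_eq_zero {k l : ℕ} (hp : ∀ m n : Fin (M + 1), k ≤ m → l ≤ n → p m n = 0) :
    binomThin ξ p k l = 0 := by
  refine sum_eq_zero fun m _ => sum_eq_zero fun n _ => ?_
  by_cases hm : k ≤ m
  · by_cases hn : l ≤ n
    · simp [hp m n hm hn]
    · simp [binomWeight_eq_zero_of_lt ξ (not_le.1 hn)]
  · simp [binomWeight_eq_zero_of_lt ξ (not_le.1 hm)]

variable {ξ p} (hp : ∀ m n : Fin (M + 1), 2 ≤ (m : ℕ) + n → p m n = 0)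
include hp

lemma binomThin_eq_zero_of_two_le {k l : ℕ} (hkl : 2 ≤ k + l) : binomThin ξ p k l = 0 :=
  binomThin_eq_zero ξ p fun m n hm hn => hp m n (by omega)

variable (hM : 1 ≤ M)
include hM

lemma binomThin_zero_zero_of_two_le :
    binomThin ξ p 0 0 = p 0 0 + (p 0 1 + p 1 0) * (1 + ξ)⁻¹ := by
  rw [binomThin, sum_sum_eq_of_eq_zero_of_two_le hM fun m n hmn => by simp [hp m n hmn]]
  simp only [Fin.val_zero, Fin.val_one_of_one_le hM, binomWeight_zero_right, pow_zero, pow_one]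
  ring

lemma binomThin_zero_one_of_two_le : binomThin ξ p 0 1 = p 0 1 * (ξ * (1 + ξ)⁻¹) := by
  rw [binomThin, sum_sum_eq_of_eq_zero_of_two_le hM fun m n hmn => by simp [hp m n hmn]]
  simp only [Fin.val_zero, Fin.val_one_of_one_le hM, binomWeight_zero_right, binomWeight_one_right,
    binomWeight_eq_zero_of_lt ξ zero_lt_one]
  ring

lemma binomThin_one_zero_of_two_le : binomThin ξ p 1 0 = p 1 0 * (ξ * (1 + ξ)⁻¹) := by
  rw [binomThin, sum_sum_eq_of_eq_zero_of_two_le hM fun m n hmn => by simp [hp m n hmn]]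
  simp only [Fin.val_zero, Fin.val_one_of_one_le hM, binomWeight_zero_right, binomWeight_one_right,
    binomWeight_eq_zero_of_lt ξ zero_lt_one]
  ring

end binomThin

lemma sq_add_sq_add_sq_binomThin_le_fBi {M : ℕ} (hM : 1 ≤ M) (ξ : ℝ)
    (p : Fin (M + 1) → Fin (M + 1) → ℝ) :
    1 / ((1 + ξ) * (1 + ξ)) *
        (binomThin ξ p 0 0 ^ 2 + binomThin ξ p 0 1 ^ 2 + binomThin ξ p 1 0 ^ 2) ≤ fBi M ξ ξ p := by
  rw [fBi_eq_sum_sq_binomThin]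
  have := add_add_le_sum_sum hM fun k l => sq_nonneg (binomThin ξ p k l)
  simp only [Fin.val_zero, Fin.val_one_of_one_le hM] at this
  exact mul_le_mul_of_nonneg_left this (one_div_nonneg.2 (mul_self_nonneg _))

lemma mul_inv_one_add {ξ : ℝ} (hξ : 1 + ξ ≠ 0) : ξ * (1 + ξ)⁻¹ = 1 - (1 + ξ)⁻¹ := by
  field_simp
  ring

def bernoulliGap (t : ℝ) (s : ℕ) : ℝ := t ^ s - 1 + (1 - t) * s

lemma bernoulliGap_nonneg {t : ℝ} (ht : -1 ≤ t) (s : ℕ) : 0 ≤ bernoulliGap t s := by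
  have := one_add_mul_le_pow (a := t - 1) (by linarith) s
  rw [add_sub_cancel] at this
  unfold bernoulliGap
  linarith

lemma mul_sq_le_bernoulliGap {t : ℝ} (ht0 : 0 ≤ t) (ht1 : t ≤ 1) {s : ℕ} (hs : 1 ≤ s) :
    (s - 1) * (1 - t) ^ 2 ≤ bernoulliGap t s := by
  induction s, hs using Nat.le_induction with
  | base => simp [bernoulliGap]
  | succ s hs ih =>
    have hts : t ^ s ≤ t := pow_le_of_le_one ht0 ht1 (by omega)
    unfold bernoulliGap at ih ⊢
    push_cast
    nlinarith [mul_nonneg (sub_nonneg.2 ht1) (sub_nonneg.2 hts), pow_succ t s]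

lemma bernoulliGap_pos {t : ℝ} (ht0 : 0 ≤ t) (ht1 : t < 1) {s : ℕ} (hs : 2 ≤ s) :
    0 < bernoulliGap t s := by
  have hs' : (2 : ℝ) ≤ s := by exact_mod_cast hs
  refine lt_of_lt_of_le ?_ (mul_sq_le_bernoulliGap ht0 ht1.le (by omega))
  exact mul_pos (by linarith) (pow_pos (by linarith) 2)

lemma mul_mul_sub_pow_le_mul_bernoulliGap {ξ t E₀ : ℝ} (hξ : 0 ≤ ξ) (ht0 : 0 ≤ t) (ht1 : t ≤ 1)
    (hξt : ξ * t = 1 - t) (hE₀ : 0 ≤ E₀) (hE₀' : E₀ ≤ 1 / 4) (s : ℕ) :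
    (1 - t) * E₀ * (ξ * (s * (t - t ^ s))) ≤ (1 - 2 * E₀ * (1 - t)) * bernoulliGap t s := by
  rcases lt_or_ge s 2 with hs | hs
  · interval_cases s <;> simp [bernoulliGap]
  have hs' : (2 : ℝ) ≤ s := by exact_mod_cast hs
  have ha : 1 / 2 ≤ 1 - 2 * E₀ * (1 - t) := by nlinarith
  calc (1 - t) * E₀ * (ξ * (s * (t - t ^ s))) ≤ (1 - t) * E₀ * (ξ * (s * t)) := by
        have := pow_nonneg ht0 s
        gcongr
        linarith
    _ = E₀ * s * (1 - t) ^ 2 := by linear_combination (1 - t) * E₀ * s * hξt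
    _ ≤ (1 - 2 * E₀ * (1 - t)) * ((s - 1) * (1 - t) ^ 2) := by
        have : E₀ * s ≤ (1 - 2 * E₀ * (1 - t)) * (s - 1) := by nlinarith
        nlinarith [sq_nonneg (1 - t)]
    _ ≤ (1 - 2 * E₀ * (1 - t)) * bernoulliGap t s :=
        mul_le_mul_of_nonneg_left (mul_sq_le_bernoulliGap ht0 ht1 (by omega)) (by linarith)

lemma sq_add_two_mul_sq_le_sq_add_sq_add_sq {a b A B C D X : ℝ} (hA : A = a + D)
    (hBC : B + C = 2 * b - X) (hbX : b * X ≤ a * D) :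
    a ^ 2 + 2 * b ^ 2 ≤ A ^ 2 + B ^ 2 + C ^ 2 ∧
      (A ^ 2 + B ^ 2 + C ^ 2 ≤ a ^ 2 + 2 * b ^ 2 → D = 0 ∧ B = C) := by
  have key : A ^ 2 + B ^ 2 + C ^ 2 - (a ^ 2 + 2 * b ^ 2)
      = 2 * (a * D - b * X) + D ^ 2 + X ^ 2 / 2 + (B - C) ^ 2 / 2 := by
    rw [hA, show C = 2 * b - X - B by linarith]
    ring
  refine ⟨by linarith [sq_nonneg D, sq_nonneg X, sq_nonneg (B - C)], fun hle => ?_⟩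
  have hD : D ^ 2 = 0 := le_antisymm (by linarith [sq_nonneg X, sq_nonneg (B - C)]) (sq_nonneg D)
  have hBC' : (B - C) ^ 2 = 0 :=
    le_antisymm (by linarith [sq_nonneg D, sq_nonneg X]) (sq_nonneg (B - C))
  exact ⟨pow_eq_zero_iff two_ne_zero |>.1 hD, sub_eq_zero.1 (pow_eq_zero_iff two_ne_zero |>.1 hBC')⟩

section feasible

variable {M : ℕ} {E₀ : ℝ} {p : Fin (M + 1) → Fin (M + 1) → ℝ}

lemma FeasibleBiEq.sum_mul_affine (hp : FeasibleBiEq M E₀ p) (α β : ℝ) :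
    ∑ m, ∑ n, p m n * (α + β * (((m : ℕ) : ℝ) + ((n : ℕ) : ℝ))) = α + β * (2 * E₀) := by
  obtain ⟨-, h1, hE⟩ := hp
  calc ∑ m, ∑ n, p m n * (α + β * (((m : ℕ) : ℝ) + ((n : ℕ) : ℝ)))
      = α * ∑ m : Fin (M + 1), ∑ n : Fin (M + 1), p m n +
          β * ∑ m : Fin (M + 1), ∑ n : Fin (M + 1), (((m : ℕ) : ℝ) + ((n : ℕ) : ℝ)) * p m n := by
        simp only [mul_sum, ← sum_add_distrib]
        exact sum_congr rfl fun m _ => sum_congr rfl fun n _ => by ring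
    _ = α + β * (2 * E₀) := by rw [h1, hE, mul_one]

variable {ξ t : ℝ} (ht : t = (1 + ξ)⁻¹) (hp : FeasibleBiEq M E₀ p)
include ht hp

lemma FeasibleBiEq.binomThin_zero_zero_eq :
    binomThin ξ p 0 0 = 1 - 2 * E₀ * (1 - t) +
      ∑ m, ∑ n, p m n * bernoulliGap t ((m : ℕ) + (n : ℕ)) := by
  rw [binomThin_zero_zero, ← ht, show 1 - 2 * E₀ * (1 - t) = 1 + -(1 - t) * (2 * E₀) by ring,
    ← hp.sum_mul_affine, ← sum_add_distrib]
  simp only [← sum_add_distrib]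
  exact sum_congr rfl fun m _ => sum_congr rfl fun n _ => by
    simp only [bernoulliGap]
    push_cast
    ring

lemma FeasibleBiEq.binomThin_zero_one_add_one_zero_eq (hξt : ξ * t = 1 - t) :
    binomThin ξ p 0 1 + binomThin ξ p 1 0 = 2 * ((1 - t) * E₀) -
      ξ * ∑ m, ∑ n, p m n * ((((m : ℕ) : ℝ) + ((n : ℕ) : ℝ)) * (t - t ^ ((m : ℕ) + (n : ℕ)))) := by
  rw [binomThin_zero_one_add_one_zero, ← ht, eq_sub_iff_add_eq, ← mul_add,
    show 2 * ((1 - t) * E₀) = ξ * (0 + t * (2 * E₀)) by linear_combination (-2 * E₀) * hξt,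
    ← hp.sum_mul_affine, ← sum_add_distrib]
  simp only [← sum_add_distrib]
  exact congrArg _ (sum_congr rfl fun m _ => sum_congr rfl fun n _ => by ring)

end feasible

lemma FeasibleBiEq.sq_add_two_mul_sq_le {M : ℕ} {ξ t E₀ : ℝ} {p : Fin (M + 1) → Fin (M + 1) → ℝ}
    (hp : FeasibleBiEq M E₀ p) (hξ : 0 < ξ) (ht : t = (1 + ξ)⁻¹) (hE₀ : 0 ≤ E₀)
    (hE₀' : E₀ ≤ 1 / 4) :
    (1 - 2 * E₀ * (1 - t)) ^ 2 + 2 * ((1 - t) * E₀) ^ 2 ≤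
        binomThin ξ p 0 0 ^ 2 + binomThin ξ p 0 1 ^ 2 + binomThin ξ p 1 0 ^ 2 ∧
      (binomThin ξ p 0 0 ^ 2 + binomThin ξ p 0 1 ^ 2 + binomThin ξ p 1 0 ^ 2 ≤
          (1 - 2 * E₀ * (1 - t)) ^ 2 + 2 * ((1 - t) * E₀) ^ 2 →
        (∀ m n : Fin (M + 1), 2 ≤ (m : ℕ) + n → p m n = 0) ∧
          binomThin ξ p 0 1 = binomThin ξ p 1 0) := by
  have ht0 : 0 < t := ht ▸ inv_pos.2 (by linarith)
  have ht1 : t < 1 := ht ▸ inv_lt_one_of_one_lt₀ (by linarith)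
  have hξt : ξ * t = 1 - t := by rw [ht]; exact mul_inv_one_add (by linarith)
  have hgap : ∀ m n : Fin (M + 1), 0 ≤ p m n * bernoulliGap t ((m : ℕ) + (n : ℕ)) :=
    fun m n => mul_nonneg (hp.1 m n) (bernoulliGap_nonneg (by linarith) _)
  have hcross : (1 - t) * E₀ * (ξ * ∑ m, ∑ n,
        p m n * ((((m : ℕ) : ℝ) + ((n : ℕ) : ℝ)) * (t - t ^ ((m : ℕ) + (n : ℕ))))) ≤
      (1 - 2 * E₀ * (1 - t)) * ∑ m, ∑ n, p m n * bernoulliGap t ((m : ℕ) + (n : ℕ)) := by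
    simp only [mul_sum]
    refine sum_le_sum fun m _ => sum_le_sum fun n _ => ?_
    have := mul_le_mul_of_nonneg_left (mul_mul_sub_pow_le_mul_bernoulliGap hξ.le ht0.le ht1.le hξt
      hE₀ hE₀' ((m : ℕ) + (n : ℕ))) (hp.1 m n)
    push_cast at this
    linarith
  obtain ⟨hle, heq⟩ := sq_add_two_mul_sq_le_sq_add_sq_add_sq (hp.binomThin_zero_zero_eq ht)
    (hp.binomThin_zero_one_add_one_zero_eq ht hξt) hcross
  refine ⟨hle, fun h => ⟨fun m n hmn => ?_, (heq h).2⟩⟩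
  have hD := (heq h).1
  rw [← Fintype.sum_prod_type'] at hD
  have := congrFun ((Fintype.sum_eq_zero_iff_of_nonneg fun x => hgap x.1 x.2).1 hD) (m, n)
  exact (mul_eq_zero.1 this).resolve_right (bernoulliGap_pos ht0.le ht1 hmn).ne'

section optBi

variable {M : ℕ} {E₀ : ℝ}

lemma optBi_eq_zero_of_two_le {m n : Fin (M + 1)} (h : 2 ≤ (m : ℕ) + n) : optBi M E₀ m n = 0 := by
  rw [optBi, if_neg (by omega), if_neg (by omega)]

lemma optBi_zero_zero : optBi M E₀ 0 0 = 1 - 2 * E₀ := by simp [optBi]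

variable (hM : 1 ≤ M)
include hM

lemma optBi_zero_one : optBi M E₀ 0 1 = E₀ := by
  simp only [optBi, Fin.val_zero, Fin.val_one_of_one_le hM]; norm_num

lemma optBi_one_zero : optBi M E₀ 1 0 = E₀ := by
  simp only [optBi, Fin.val_zero, Fin.val_one_of_one_le hM]; norm_num

lemma optBi_feasible (hE₀ : 0 ≤ E₀) (hE₀' : 2 * E₀ ≤ 1) : FeasibleBiEq M E₀ (optBi M E₀) := by
  refine ⟨fun m n => ?_, ?_, ?_⟩
  · unfold optBi
    split_ifs <;> linarith
  · rw [sum_sum_eq_of_eq_zero_of_two_le hM fun m n => optBi_eq_zero_of_two_le, optBi_zero_zero,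
      optBi_zero_one hM, optBi_one_zero hM]
    ring
  · rw [sum_sum_eq_of_eq_zero_of_two_le hM fun m n h => by rw [optBi_eq_zero_of_two_le h, mul_zero]]
    simp only [Fin.val_zero, Fin.val_one_of_one_le hM, optBi_zero_zero, optBi_zero_one hM,
      optBi_one_zero hM]
    push_cast
    ring

lemma fBi_optBi {ξ t : ℝ} (hξ : 1 + ξ ≠ 0) (ht : t = (1 + ξ)⁻¹) :
    fBi M ξ ξ (optBi M E₀) =
      1 / ((1 + ξ) * (1 + ξ)) * ((1 - 2 * E₀ * (1 - t)) ^ 2 + 2 * ((1 - t) * E₀) ^ 2) := by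
  have hsupp : ∀ m n : Fin (M + 1), 2 ≤ (m : ℕ) + n → optBi M E₀ m n = 0 :=
    fun _ _ => optBi_eq_zero_of_two_le
  have hξt : ξ * t = 1 - t := by rw [ht]; exact mul_inv_one_add hξ
  rw [fBi_eq_sum_sq_binomThin, sum_sum_eq_of_eq_zero_of_two_le hM fun k l hkl => by
    rw [binomThin_eq_zero_of_two_le hsupp hkl, zero_pow two_ne_zero]]
  simp only [Fin.val_zero, Fin.val_one_of_one_le hM, binomThin_zero_zero_of_two_le hsupp hM,
    binomThin_zero_one_of_two_le hsupp hM, binomThin_one_zero_of_two_le hsupp hM, optBi_zero_zero,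
    optBi_zero_one hM, optBi_one_zero hM, ← ht]
  linear_combination 1 / ((1 + ξ) * (1 + ξ)) * (2 * E₀ ^ 2 * (ξ * t + (1 - t))) * hξt

end optBi

lemma FeasibleBiEq.eq_optBi {M : ℕ} {E₀ : ℝ} {p : Fin (M + 1) → Fin (M + 1) → ℝ}
    (hp : FeasibleBiEq M E₀ p) (hM : 1 ≤ M)
    (hsupp : ∀ m n : Fin (M + 1), 2 ≤ (m : ℕ) + n → p m n = 0)
    (hsymm : p 0 1 = p 1 0) : p = optBi M E₀ := by
  obtain ⟨-, h1, hE⟩ := hp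
  rw [sum_sum_eq_of_eq_zero_of_two_le hM hsupp] at h1
  rw [sum_sum_eq_of_eq_zero_of_two_le hM fun m n hmn => by rw [hsupp m n hmn, mul_zero]] at hE
  simp only [Fin.val_zero, Fin.val_one_of_one_le hM, Nat.cast_zero, Nat.cast_one] at hE
  refine eq_of_eq_zero_of_two_le hM hsupp (fun _ _ => optBi_eq_zero_of_two_le) ?_ ?_ ?_ <;>
    simp only [optBi_zero_zero, optBi_zero_one hM, optBi_one_zero hM] <;> linarith

theorem bidirectional_optimal_eq_constraint_general (ξ E E₀ : ℝ) (M : ℕ) (hξ : 0 < ξ)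
    (hM : 1 ≤ M) (hE : 2 * E ≤ (1 + ξ) / (2 + 3 * ξ))
    (hE₀ : E₀ ∈ Set.Icc 0 E) :
    FeasibleBiEq M E₀ (optBi M E₀) ∧
      ∀ p : Fin (M + 1) → Fin (M + 1) → ℝ, FeasibleBiEq M E₀ p →
        fBi M ξ ξ (optBi M E₀) ≤ fBi M ξ ξ p ∧
          (fBi M ξ ξ p = fBi M ξ ξ (optBi M E₀) → p = optBi M E₀) := by
  obtain ⟨hE₀, hE₀E⟩ := hE₀
  have hE₀' : E₀ ≤ 1 / 4 := by
    have : (1 + ξ) / (2 + 3 * ξ) ≤ 1 / 2 := by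
      rw [div_le_div_iff₀ (by positivity) two_pos]
      linarith
    linarith
  have hc : 0 < 1 / ((1 + ξ) * (1 + ξ)) := by positivity
  refine ⟨optBi_feasible hM hE₀ (by linarith), fun p hp => ?_⟩
  obtain ⟨hle, heq⟩ := hp.sq_add_two_mul_sq_le hξ rfl hE₀ hE₀'
  have hthree := sq_add_sq_add_sq_binomThin_le_fBi hM ξ p
  rw [fBi_optBi hM (by positivity) rfl]
  refine ⟨(mul_le_mul_of_nonneg_left hle hc.le).trans hthree, fun h => ?_⟩
  obtain ⟨hsupp, hcross⟩ := heq (le_of_mul_le_mul_left (h ▸ hthree) hc)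
  rw [binomThin_zero_one_of_two_le hsupp hM, binomThin_one_zero_of_two_le hsupp hM] at hcross
  exact hp.eq_optBi hM hsupp (mul_right_cancel₀ (by positivity) hcross)

theorem bidirectional_optimal_eq_constraint (ξ E E₀ : ℝ) (M : ℕ) (hξ : 0 < ξ)
    (hM : 1 ≤ M) (hE0 : 0 ≤ 2 * E) (hE : 2 * E ≤ (1 + ξ) / (2 + 3 * ξ))
    (hE₀ : E₀ ∈ Set.Icc 0 E) :
    FeasibleBiEq M E₀ (optBi M E₀) ∧
      ∀ p : Fin (M + 1) → Fin (M + 1) → ℝ, FeasibleBiEq M E₀ p →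
        fBi M ξ ξ (optBi M E₀) ≤ fBi M ξ ξ p ∧
          (fBi M ξ ξ p = fBi M ξ ξ (optBi M E₀) → p = optBi M E₀) :=
  bidirectional_optimal_eq_constraint_general ξ E E₀ M hξ hM hE hE₀
end
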